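/- (Fourier representation of twisted waves.) Let α ∈ ℤ, β ∈ ℝ, γ > 0 and n ∈ ℂ³, let E₀ be the twisted wave with parameters (α,β,γ) and polarization vector n, and set k₀ = (0, γ, β) ∈ ℝ³. Then for every x ∈ ℝ³ with x₁² + x₂² > 0: E₀(x) = (1/2π) ∫₀^{2π} e^{iαΦ} (R_Φ n) e^{i (R_Φ k₀) · x} dΦ, i.e. the twisted wave is a phase-modulated superposition of plane waves whose wavevectors run over the circle {R_Φ k₀ : Φ ∈ [0,2π]} and whose polarization vectors rotate along with the wavevector. -/

import Mathlib

noncomputable section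

open Real MeasureTheory

abbrev V3 : Type := Fin 3 → ℝ
abbrev C3 : Type := Fin 3 → ℂ

/-- Partial derivative of a scalar field in the `i`-th coordinate direction. -/
def pd (i : Fin 3) (f : V3 → ℂ) (x : V3) : ℂ := fderiv ℝ f x (Pi.single i 1)

/-- Componentwise Laplacian of a scalar field. -/
def lap (f : V3 → ℂ) (x : V3) : ℂ := ∑ i, pd i (pd i f) x

/-- Rotation by angle `θ` about the `e₃` axis. -/
def Rot (θ : ℝ) : Matrix (Fin 3) (Fin 3) ℝ :=
  !![Real.cos θ, -Real.sin θ, 0; Real.sin θ, Real.cos θ, 0; 0, 0, 1]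

/-- Complexified rotation matrix. -/
def RotC (θ : ℝ) : Matrix (Fin 3) (Fin 3) ℂ := (Rot θ).map (fun a => (a : ℂ))

/-- The polarization tensor N(n). -/
def Nmat (n : C3) : Matrix (Fin 3) (Fin 3) ℂ :=
  !![(n 0 + Complex.I * n 1)/2, (n 0 - Complex.I * n 1)/2, 0;
     (n 1 - Complex.I * n 0)/2, (n 1 + Complex.I * n 0)/2, 0;
     0, 0, n 2]

/-- Bessel function of integer order, via the Bessel integral
`J_ν(A) = (1/2π) ∫₀^{2π} e^{i(νφ − A sin φ)} dφ`. -/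
def besselJ (ν : ℤ) (A : ℝ) : ℂ :=
  (1/(2*Real.pi)) * ∫ φ in (0:ℝ)..(2*Real.pi),
    Complex.exp (Complex.I * (((ν : ℝ) * φ - A * Real.sin φ : ℝ) : ℂ))

/-- The Bessel vector `(J_{α+1}(γr), J_{α−1}(γr), J_α(γr))`. -/
def Jvec (α : ℤ) (γ r : ℝ) : C3 :=
  ![besselJ (α+1) (γ*r), besselJ (α-1) (γ*r), besselJ α (γ*r)]

/-- Twisted wave with parameters `(α, β, γ)` and polarization vector `n`,
expressed in cylindrical coordinates:
`E₀ = e^{i(αφ+βz)} R_φ N(n) (J_{α+1}(γr), J_{α−1}(γr), J_α(γr))ᵀ`. -/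
def twistedCyl (α : ℤ) (β γ : ℝ) (n : C3) (r φ z : ℝ) : C3 :=
  Complex.exp (Complex.I * (((α : ℝ) * φ + β * z : ℝ) : ℂ)) •
    (RotC φ).mulVec ((Nmat n).mulVec (Jvec α γ r))

/-!
In cylindrical coordinates `x = (r cos φ, r sin φ, z)` the phase is
`(R_Φ k₀) · x = βz + γr sin(φ - Φ)`. The integrand is `2π`-periodic in `Φ`, so the substitution
`Φ = φ + ψ` together with `R_{φ+ψ} = R_φ R_ψ` pulls out the factor `e^{i(αφ+βz)} R_φ`. Writing
`e_ν(ψ) = e^{i(νψ - γr sin ψ)}`, the components of `R_ψ n` are combinations of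
`cos ψ = (e^{iψ} + e^{-iψ})/2` and `sin ψ`, and multiplication by `e^{±iψ}` shifts `e_α` to
`e_{α±1}`; this gives `e_α(ψ) R_ψ n = N(n) (e_{α+1}, e_{α-1}, e_α)(ψ)`, and
`∫₀^{2π} e_ν = 2π J_ν(γr)`.
-/

open Matrix

theorem intervalIntegral_mulVec_apply {𝕜 ι κ : Type*} [RCLike 𝕜] [Fintype κ] (M : Matrix ι κ 𝕜)
    {v : ℝ → κ → 𝕜} {a b : ℝ} {μ : Measure ℝ}
    (hv : ∀ k, IntervalIntegrable (fun t => v t k) μ a b) (i : ι) :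
    ∫ t in a..b, (M *ᵥ v t) i ∂μ = (M *ᵥ fun k => ∫ t in a..b, v t k ∂μ) i := by
  simp only [mulVec, dotProduct]
  rw [intervalIntegral.integral_finsetSum fun k _ => (hv k).const_mul _]
  simp only [intervalIntegral.integral_const_mul]

theorem Function.Periodic.intervalIntegral_comp_add_left {E : Type*} [NormedAddCommGroup E]
    [NormedSpace ℝ E] {f : ℝ → E} {T : ℝ} (hf : Function.Periodic f T) (c : ℝ) :
    ∫ t in (0:ℝ)..T, f (c + t) = ∫ t in (0:ℝ)..T, f t := by
  simpa [intervalIntegral.integral_comp_add_left f c] using hf.intervalIntegral_add_eq c 0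

def besselIntegrand (ν : ℤ) (A ψ : ℝ) : ℂ :=
  Complex.exp (Complex.I * ((ν * ψ - A * Real.sin ψ : ℝ) : ℂ))

lemma continuous_besselIntegrand (ν : ℤ) (A : ℝ) : Continuous (besselIntegrand ν A) := by
  unfold besselIntegrand; fun_prop

lemma integral_besselIntegrand (ν : ℤ) (A : ℝ) :
    ∫ ψ in (0:ℝ)..2 * π, besselIntegrand ν A ψ = 2 * π * besselJ ν A := by
  have : (π : ℂ) ≠ 0 := by exact_mod_cast pi_ne_zero
  simp only [besselJ, besselIntegrand]
  field_simp

lemma besselIntegrand_add_one (ν : ℤ) (A ψ : ℝ) :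
    besselIntegrand (ν + 1) A ψ = besselIntegrand ν A ψ * (cos ψ + sin ψ * Complex.I) := by
  rw [besselIntegrand, besselIntegrand, Complex.ofReal_cos, Complex.ofReal_sin, ← Complex.exp_mul_I,
    ← Complex.exp_add]
  push_cast; ring_nf

lemma besselIntegrand_sub_one (ν : ℤ) (A ψ : ℝ) :
    besselIntegrand (ν - 1) A ψ = besselIntegrand ν A ψ * (cos ψ - sin ψ * Complex.I) := by
  have : (cos ψ - sin ψ * Complex.I : ℂ) = Complex.exp (-ψ * Complex.I) := by
    rw [Complex.exp_mul_I, Complex.cos_neg, Complex.sin_neg]; push_cast; ring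
  rw [this, besselIntegrand, besselIntegrand, ← Complex.exp_add]
  push_cast; ring_nf

def besselIntegrandVec (α : ℤ) (A ψ : ℝ) : C3 :=
  ![besselIntegrand (α + 1) A ψ, besselIntegrand (α - 1) A ψ, besselIntegrand α A ψ]

lemma continuous_besselIntegrandVec (α : ℤ) (A : ℝ) : Continuous (besselIntegrandVec α A) := by
  refine continuous_pi fun k => ?_
  fin_cases k <;> exact continuous_besselIntegrand _ _

lemma integral_besselIntegrandVec (α : ℤ) (γ r : ℝ) :
    (fun k => ∫ ψ in (0:ℝ)..2 * π, besselIntegrandVec α (γ * r) ψ k) =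
      (2 * π : ℂ) • Jvec α γ r := by
  funext k
  fin_cases k <;> simp [besselIntegrandVec, Jvec, integral_besselIntegrand]

lemma rot_add (a b : ℝ) : Rot (a + b) = Rot a * Rot b := by
  ext i j
  fin_cases i <;> fin_cases j <;>
    simp [Rot, mul_apply, Fin.sum_univ_three, cos_add, sin_add] <;> ring

lemma rotC_add (a b : ℝ) : RotC (a + b) = RotC a * RotC b := by
  rw [RotC, rot_add]; exact Matrix.map_mul (f := Complex.ofRealHom)

lemma rot_periodic : Function.Periodic Rot (2 * π) := by
  intro θ; simp [Rot]

lemma rotC_mulVec (ψ : ℝ) (v : C3) :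
    RotC ψ *ᵥ v = ![cos ψ * v 0 - sin ψ * v 1, sin ψ * v 0 + cos ψ * v 1, v 2] := by
  ext j; fin_cases j <;> simp [RotC, Rot, mulVec, dotProduct, Fin.sum_univ_three, sub_eq_add_neg]

lemma nmat_mulVec (n : C3) (a b c : ℂ) :
    Nmat n *ᵥ ![a, b, c] = ![(n 0 + Complex.I * n 1) / 2 * a + (n 0 - Complex.I * n 1) / 2 * b,
      (n 1 - Complex.I * n 0) / 2 * a + (n 1 + Complex.I * n 0) / 2 * b, n 2 * c] := by
  ext k; fin_cases k <;> simp [Nmat, mulVec, dotProduct, Fin.sum_univ_three]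

lemma besselIntegrand_smul_rotC_mulVec (α : ℤ) (A ψ : ℝ) (n : C3) :
    besselIntegrand α A ψ • RotC ψ *ᵥ n = Nmat n *ᵥ besselIntegrandVec α A ψ := by
  set B := besselIntegrand α A ψ
  rw [rotC_mulVec, smul_vec3, besselIntegrandVec, nmat_mulVec, besselIntegrand_add_one,
    besselIntegrand_sub_one]
  simp only [smul_eq_mul]
  refine vec3_eq ?_ ?_ ?_
  · linear_combination (-(B * sin ψ * n 1)) * Complex.I_sq
  · linear_combination (B * sin ψ * n 0) * Complex.I_sq
  · ring

lemma exp_int_mul_periodic (α : ℤ) :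
    Function.Periodic (fun Φ : ℝ => Complex.exp (Complex.I * ((α * Φ : ℝ) : ℂ))) (2 * π) := by
  intro Φ
  have : Complex.I * ((α * (Φ + 2 * π) : ℝ) : ℂ) =
      Complex.I * ((α * Φ : ℝ) : ℂ) + α * (2 * π * Complex.I) := by
    push_cast; ring
  simp only [this, Complex.exp_add, Complex.exp_int_mul_two_pi_mul_I, mul_one]

def planeWaveIntegrand (α : ℤ) (k₀ x : V3) (n : C3) (i : Fin 3) (Φ : ℝ) : ℂ :=
  Complex.exp (Complex.I * ((α * Φ : ℝ) : ℂ)) * (RotC Φ *ᵥ n) i *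
    Complex.exp (Complex.I * ((∑ j, (Rot Φ *ᵥ k₀) j * x j : ℝ) : ℂ))

lemma planeWaveIntegrand_periodic (α : ℤ) (k₀ x : V3) (n : C3) (i : Fin 3) :
    Function.Periodic (planeWaveIntegrand α k₀ x n i) (2 * π) := by
  refine ((exp_int_mul_periodic α).mul ?_).mul ?_ <;> intro Φ <;> simp only [RotC, rot_periodic Φ]

lemma exists_cylindrical_coords (x : V3) (hx : 0 < x 0 ^ 2 + x 1 ^ 2) :
    ∃ r φ z : ℝ, 0 < r ∧ x = ![r * cos φ, r * sin φ, z] := by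
  set w : ℂ := ⟨x 0, x 1⟩
  have hw : w ≠ 0 := by
    rintro h
    have h0 : x 0 = 0 := congrArg Complex.re h
    have h1 : x 1 = 0 := congrArg Complex.im h
    simp [h0, h1] at hx
  refine ⟨‖w‖, Complex.arg w, x 2, norm_pos_iff.mpr hw, ?_⟩
  rw [Complex.norm_mul_cos_arg, Complex.norm_mul_sin_arg]
  funext j; fin_cases j <;> rfl

lemma rot_wavevector_dot_cylindrical (β γ r φ z ψ : ℝ) :
    ∑ j, (Rot (φ + ψ) *ᵥ ![0, γ, β]) j * (![r * cos φ, r * sin φ, z] : V3) j =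
      β * z - γ * r * sin ψ := by
  simp only [Rot, mulVec, dotProduct, Fin.sum_univ_three, cos_add, sin_add, of_apply, cons_val',
    cons_val_fin_one, cons_val_zero, cons_val_one, cons_val]
  linear_combination (-(γ * r * sin ψ)) * sin_sq_add_cos_sq φ

lemma planeWaveIntegrand_cylindrical_add (α : ℤ) (β γ r φ z ψ : ℝ) (n : C3) (i : Fin 3) :
    planeWaveIntegrand α ![0, γ, β] ![r * cos φ, r * sin φ, z] n i (φ + ψ) =
      Complex.exp (Complex.I * ((α * φ + β * z : ℝ) : ℂ)) *
        ((RotC φ * Nmat n) *ᵥ besselIntegrandVec α (γ * r) ψ) i := by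
  rw [planeWaveIntegrand, rot_wavevector_dot_cylindrical, rotC_add, ← mulVec_mulVec,
    ← mulVec_mulVec, ← besselIntegrand_smul_rotC_mulVec, mulVec_smul, Pi.smul_apply, smul_eq_mul,
    besselIntegrand, mul_right_comm, ← Complex.exp_add, ← mul_assoc, ← Complex.exp_add]
  congr 2
  push_cast; ring

theorem twistedWave_fourier_representation_general
    (α : ℤ) (β γ : ℝ) (n : C3)
    (E : V3 → C3)
    (hE : ∀ r φ z : ℝ, 0 < r →
      E ![r * Real.cos φ, r * Real.sin φ, z] = twistedCyl α β γ n r φ z) :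
    ∀ x : V3, 0 < x 0 ^ 2 + x 1 ^ 2 → ∀ i : Fin 3,
      E x i = ((1/(2*Real.pi) : ℝ) : ℂ) *
        ∫ Φ in (0:ℝ)..(2*Real.pi),
          Complex.exp (Complex.I * (((α : ℝ) * Φ : ℝ) : ℂ)) *
            (RotC Φ).mulVec n i *
            Complex.exp (Complex.I *
              ((∑ j, (Rot Φ).mulVec (![0, γ, β] : V3) j * x j : ℝ) : ℂ)) := by
  intro x hx i
  obtain ⟨r, φ, z, hr, rfl⟩ := exists_cylindrical_coords x hx
  have hJ (k : Fin 3) :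
      IntervalIntegrable (fun ψ => besselIntegrandVec α (γ * r) ψ k) volume 0 (2 * π) :=
    ((continuous_apply k).comp (continuous_besselIntegrandVec α _)).intervalIntegrable _ _
  change _ = _ * ∫ Φ in (0:ℝ)..2 * π, planeWaveIntegrand α ![0, γ, β] _ n i Φ
  rw [hE r φ z hr, ← (planeWaveIntegrand_periodic α _ _ n i).intervalIntegral_comp_add_left φ]
  simp only [planeWaveIntegrand_cylindrical_add]
  rw [intervalIntegral.integral_const_mul, intervalIntegral_mulVec_apply _ hJ,
    integral_besselIntegrandVec]
  have : (π : ℂ) ≠ 0 := by exact_mod_cast pi_ne_zero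
  rw [twistedCyl, mulVec_smul, ← mulVec_mulVec]
  simp only [Pi.smul_apply, smul_eq_mul]
  push_cast
  field_simp

/-- **Fourier representation of twisted waves.** A twisted wave is a
phase-modulated superposition of plane waves whose wavevectors run over the
circle `{R_Φ k₀ : Φ ∈ [0,2π]}`, `k₀ = (0,γ,β)`, with polarization vectors
rotating along: `E₀(x) = (1/2π) ∫₀^{2π} e^{iαΦ} (R_Φ n) e^{i(R_Φ k₀)·x} dΦ`. -/
theorem twistedWave_fourier_representation
    (α : ℤ) (β γ : ℝ) (hγ : 0 < γ) (n : C3)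
    (E : V3 → C3)
    (hE : ∀ r φ z : ℝ, 0 < r →
      E ![r * Real.cos φ, r * Real.sin φ, z] = twistedCyl α β γ n r φ z) :
    ∀ x : V3, 0 < x 0 ^ 2 + x 1 ^ 2 → ∀ i : Fin 3,
      E x i = ((1/(2*Real.pi) : ℝ) : ℂ) *
        ∫ Φ in (0:ℝ)..(2*Real.pi),
          Complex.exp (Complex.I * (((α : ℝ) * Φ : ℝ) : ℂ)) *
            (RotC Φ).mulVec n i *
            Complex.exp (Complex.I *
              ((∑ j, (Rot Φ).mulVec (![0, γ, β] : V3) j * x j : ℝ) : ℂ)) :=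
  twistedWave_fourier_representation_general α β γ n E hE
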